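/- The 5×5 complex matrices b⁺ = √2(E₃₅ + E₄₃) and b⁻ = √2(E₃₄ − E₅₃) satisfy the single-mode paraboson triple relations: [{b⁺,b⁻}, b⁺] = 2b⁺, [{b⁺,b⁻}, b⁻] = −2b⁻, [{b⁺,b⁺}, b⁻] = −4b⁺, [{b⁻,b⁻}, b⁺] = 4b⁻, [{b⁺,b⁺}, b⁺] = 0, [{b⁻,b⁻}, b⁻] = 0. -/

import Mathlib

open Matrix Complex

noncomputable section

abbrev M5 := Matrix (Fin 5) (Fin 5) ℂ

def E (i j : Fin 5) : M5 := Matrix.single i j 1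

def fp : M5 := (Real.sqrt 2 : ℂ) • (E 0 2 - E 2 1)
def fm : M5 := (Real.sqrt 2 : ℂ) • (E 2 0 - E 1 2)
def bp : M5 := (Real.sqrt 2 : ℂ) • (E 2 4 + E 3 2)
def bm : M5 := (Real.sqrt 2 : ℂ) • (E 2 3 - E 4 2)

def lb (A B : M5) : M5 := A * B - B * A
def ab (A B : M5) : M5 := A * B + B * A

/-!
Each relation is homogeneous of degree three, so writing `bp = √2 • bp₀`, `bm = √2 • bm₀` reduces
it to the same relation for `bp₀, bm₀` up to the factor `(√2)³ = 2√2`. The anticommutators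
`{bp₀, bm₀} = E 3 3 - E 4 4`, `{bp₀, bp₀} = 2 E 3 4`, `{bm₀, bm₀} = -2 E 4 3` form an sl₂-triple,
acting on `span {bp₀, bm₀}` as on the defining representation.
-/

theorem E_mul_E (i j k l : Fin 5) : E i j * E k l = if j = k then E i l else 0 := by
  split_ifs with h
  · subst h; simp [E]
  · simp [E, h]

theorem lb_smul_left (c : ℂ) (A B : M5) : lb (c • A) B = c • lb A B := by
  simp only [lb, smul_mul_assoc, mul_smul_comm, smul_sub]

theorem lb_ab_smul (c : ℂ) (A B C : M5) :
    lb (ab (c • A) (c • B)) (c • C) = c ^ 3 • lb (ab A B) C := by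
  simp only [lb, ab, smul_mul_assoc, mul_smul_comm, smul_smul, ← smul_add, smul_sub]
  ring_nf

def bp₀ : M5 := E 2 4 + E 3 2
def bm₀ : M5 := E 2 3 - E 4 2

theorem bp_eq : bp = (Real.sqrt 2 : ℂ) • bp₀ := rfl
theorem bm_eq : bm = (Real.sqrt 2 : ℂ) • bm₀ := rfl

theorem sqrt_two_pow_three : (Real.sqrt 2 : ℂ) ^ 3 = 2 * Real.sqrt 2 := by
  rw [pow_succ, sq, ← ofReal_mul, Real.mul_self_sqrt zero_le_two]
  push_cast
  ring

theorem ab_bp₀_bm₀ : ab bp₀ bm₀ = E 3 3 - E 4 4 := by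
  simp only [ab, bp₀, bm₀, mul_add, add_mul, mul_sub, sub_mul, E_mul_E, Fin.reduceEq, ↓reduceIte]
  module

theorem ab_bp₀_bp₀ : ab bp₀ bp₀ = (2 : ℂ) • E 3 4 := by
  simp only [ab, bp₀, mul_add, add_mul, E_mul_E, Fin.reduceEq, ↓reduceIte]
  module

theorem ab_bm₀_bm₀ : ab bm₀ bm₀ = (-2 : ℂ) • E 4 3 := by
  simp only [ab, bm₀, mul_sub, sub_mul, E_mul_E, Fin.reduceEq, ↓reduceIte]
  module

theorem lb_E33_sub_E44_bp₀ : lb (E 3 3 - E 4 4) bp₀ = bp₀ := by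
  simp only [lb, bp₀, mul_add, add_mul, mul_sub, sub_mul, E_mul_E, Fin.reduceEq, ↓reduceIte]
  module

theorem lb_E33_sub_E44_bm₀ : lb (E 3 3 - E 4 4) bm₀ = -bm₀ := by
  simp only [lb, bm₀, mul_sub, sub_mul, E_mul_E, Fin.reduceEq, ↓reduceIte]
  module

theorem lb_E34_bm₀ : lb (E 3 4) bm₀ = -bp₀ := by
  simp only [lb, bp₀, bm₀, mul_sub, sub_mul, E_mul_E, Fin.reduceEq, ↓reduceIte]
  module

theorem lb_E43_bp₀ : lb (E 4 3) bp₀ = -bm₀ := by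
  simp only [lb, bp₀, bm₀, mul_add, add_mul, E_mul_E, Fin.reduceEq, ↓reduceIte]
  module

theorem lb_E34_bp₀ : lb (E 3 4) bp₀ = 0 := by
  simp only [lb, bp₀, mul_add, add_mul, E_mul_E, Fin.reduceEq, ↓reduceIte]
  module

theorem lb_E43_bm₀ : lb (E 4 3) bm₀ = 0 := by
  simp only [lb, bm₀, mul_sub, sub_mul, E_mul_E, Fin.reduceEq, ↓reduceIte]
  module

/-- Single-mode paraboson triple relations for the 5×5 matrices b⁺, b⁻. -/
theorem paraboson_triple_relations :
    lb (ab bp bm) bp = (2 : ℂ) • bp ∧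
    lb (ab bp bm) bm = (-2 : ℂ) • bm ∧
    lb (ab bp bp) bm = (-4 : ℂ) • bp ∧
    lb (ab bm bm) bp = (4 : ℂ) • bm ∧
    lb (ab bp bp) bp = 0 ∧
    lb (ab bm bm) bm = 0 := by
  rw [bp_eq, bm_eq]
  simp only [lb_ab_smul, sqrt_two_pow_three, ab_bp₀_bm₀, ab_bp₀_bp₀, ab_bm₀_bm₀, lb_smul_left,
    lb_E33_sub_E44_bp₀, lb_E33_sub_E44_bm₀, lb_E34_bm₀, lb_E43_bp₀, lb_E34_bp₀, lb_E43_bm₀]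
  refine ⟨?_, ?_, ?_, ?_, ?_, ?_⟩ <;> module
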